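/- Let (M,d) be a compact metric space, E : M → ℝ continuous, and x₀ ∈ M. For r > 0 define e(r) := min over v ∈ M of ( d²(v, x₀)/(2r) + E(v) ), and let u(r) denote any minimizer. Then for all 0 < s < t: d²(u(s), x₀)/(2·s·t) ≤ (e(s) − e(t))/(t − s) ≤ d²(u(t), x₀)/(2·s·t). -/

import Mathlib

theorem sub_mul_le_min_sub_min_le {α : Type*} {f g : α → ℝ} {a b : ℝ} {x y : α}
    (hx : ∀ v, a * f x + g x ≤ a * f v + g v) (hy : ∀ v, b * f y + g y ≤ b * f v + g v) :
    (a - b) * f x ≤ (a * f x + g x) - (b * f y + g y) ∧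
      (a * f x + g x) - (b * f y + g y) ≤ (a - b) * f y := by
  constructor <;> linarith [hx y, hy x]

theorem stmt_3 {M : Type*} [MetricSpace M]
    (E : M → ℝ) (x₀ : M)
    (u : ℝ → M)
    (hmin : ∀ r : ℝ, 0 < r → ∀ v : M,
      dist (u r) x₀ ^ 2 / (2 * r) + E (u r) ≤ dist v x₀ ^ 2 / (2 * r) + E v)
    (e : ℝ → ℝ)
    (he : ∀ r : ℝ, 0 < r → e r = dist (u r) x₀ ^ 2 / (2 * r) + E (u r))
    (s t : ℝ) (hs : 0 < s) (hst : s < t) :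
    dist (u s) x₀ ^ 2 / (2 * s * t) ≤ (e s - e t) / (t - s) ∧
    (e s - e t) / (t - s) ≤ dist (u t) x₀ ^ 2 / (2 * s * t) := by
  have ht : 0 < t := hs.trans hst
  have hts : 0 < t - s := sub_pos.2 hst
  simp only [div_eq_inv_mul] at hmin he
  obtain ⟨hlow, hupp⟩ := sub_mul_le_min_sub_min_le (f := (dist · x₀ ^ 2)) (hmin s hs) (hmin t ht)
  have hweight : ∀ c : ℝ, ((2 * s)⁻¹ - (2 * t)⁻¹) * c = (2 * s * t)⁻¹ * c * (t - s) := by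
    intro c
    field_simp
  rw [hweight, ← he s hs, ← he t ht] at hlow hupp
  simp only [div_eq_inv_mul _ (2 * s * t : ℝ)]
  exact ⟨(le_div_iff₀ hts).2 hlow, (div_le_iff₀ hts).2 hupp⟩
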